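/- arXiv:2310.13655 — 2 statements merged into one kernel-verified Lean document; each statement's English description precedes it below -/
import Mathlib

section
/- Let M : ℝ → Matrix (Fin n) (Fin n) ℝ be a differentiable family of symmetric positive definite matrices and μ > 0 such that -μ·M(θ) ≼ M'(θ) ≼ μ·M(θ) (in the Loewner order) for all θ. Then for every fixed vector v and every θ with vᵀM(θ)v > 0, the function θ ↦ log(vᵀM(θ)v) has derivative bounded in absolute value by μ. -/
open Matrix

/-- Entrywise derivative of a matrix-valued function. -/
noncomputable def matDeriv {n : ℕ} (M : ℝ → Matrix (Fin n) (Fin n) ℝ) (θ : ℝ) :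
    Matrix (Fin n) (Fin n) ℝ :=
  Matrix.of fun i j => deriv (fun t => M t i j) θ

theorem Matrix.abs_dotProduct_mulVec_le_of_loewner_sandwich {ι R : Type*} [Fintype ι]
    [CommRing R] [LinearOrder R] [IsStrictOrderedRing R] [StarRing R] [TrivialStar R]
    {A B : Matrix ι ι R} {c : R} (hub : (c • A - B).PosSemidef) (hlb : (B + c • A).PosSemidef)
    (v : ι → R) : |v ⬝ᵥ B *ᵥ v| ≤ c * (v ⬝ᵥ A *ᵥ v) := by
  have hupper := hub.dotProduct_mulVec_nonneg v
  have hlower := hlb.dotProduct_mulVec_nonneg v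
  simp only [star_trivial, sub_mulVec, add_mulVec, smul_mulVec, dotProduct_sub, dotProduct_add,
    dotProduct_smul, smul_eq_mul] at hupper hlower
  exact abs_le.2 ⟨by linarith, by linarith⟩

theorem Matrix.hasDerivAt_dotProduct_mulVec {ι 𝕜 : Type*} [Fintype ι] [NontriviallyNormedField 𝕜]
    {M : 𝕜 → Matrix ι ι 𝕜} {M' : Matrix ι ι 𝕜} {θ : 𝕜}
    (hM : ∀ i j, HasDerivAt (fun t => M t i j) (M' i j) θ) (v : ι → 𝕜) :
    HasDerivAt (fun t => v ⬝ᵥ M t *ᵥ v) (v ⬝ᵥ M' *ᵥ v) θ :=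
  HasDerivAt.fun_sum fun i _ =>
    (HasDerivAt.fun_sum fun j _ => (hM i j).mul_const (v j)).const_mul (v i)

theorem abs_deriv_log_le_of_abs_deriv_le {f : ℝ → ℝ} {f' μ θ : ℝ} (hf : HasDerivAt f f' θ)
    (hpos : 0 < f θ) (hbound : |f'| ≤ μ * f θ) : |deriv (fun t => Real.log (f t)) θ| ≤ μ := by
  rwa [(hf.log hpos.ne').deriv, abs_div, abs_of_pos hpos, div_le_iff₀ hpos]

theorem loewner_deriv_bound_implies_log_grad_bound_general {n : ℕ}
    (M : ℝ → Matrix (Fin n) (Fin n) ℝ) (μ : ℝ)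
    (hdiff : ∀ i j : Fin n, Differentiable ℝ fun θ => M θ i j)
    (hub : ∀ θ : ℝ, (μ • M θ - matDeriv M θ).PosSemidef)
    (hlb : ∀ θ : ℝ, (matDeriv M θ + μ • M θ).PosSemidef) :
    ∀ (v : Fin n → ℝ) (θ : ℝ), 0 < v ⬝ᵥ (M θ).mulVec v →
      |deriv (fun t => Real.log (v ⬝ᵥ (M t).mulVec v)) θ| ≤ μ := by
  intro v θ hpos
  have hquad : HasDerivAt (fun t => v ⬝ᵥ M t *ᵥ v) (v ⬝ᵥ matDeriv M θ *ᵥ v) θ :=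
    hasDerivAt_dotProduct_mulVec (fun i j => (hdiff i j θ).hasDerivAt) v
  exact abs_deriv_log_le_of_abs_deriv_le hquad hpos
    (abs_dotProduct_mulVec_le_of_loewner_sandwich (hub θ) (hlb θ) v)

theorem loewner_deriv_bound_implies_log_grad_bound {n : ℕ}
    (M : ℝ → Matrix (Fin n) (Fin n) ℝ) (μ : ℝ) (hμ : 0 < μ)
    (hdiff : ∀ i j : Fin n, Differentiable ℝ fun θ => M θ i j)
    (hpd : ∀ θ : ℝ, (M θ).PosDef)
    (hub : ∀ θ : ℝ, (μ • M θ - matDeriv M θ).PosSemidef)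
    (hlb : ∀ θ : ℝ, (matDeriv M θ + μ • M θ).PosSemidef) :
    ∀ (v : Fin n → ℝ) (θ : ℝ), 0 < v ⬝ᵥ (M θ).mulVec v →
      |deriv (fun t => Real.log (v ⬝ᵥ (M t).mulVec v)) θ| ≤ μ :=
  loewner_deriv_bound_implies_log_grad_bound_general M μ hdiff hub hlb
end

section
/- Let E : ℝ → ℝ be differentiable and nonnegative with E'(t) ≤ -ρ̄·E(t) + α²·|θ̃(t)|² where ρ̄ > 0, α ≥ 0, and θ̃ : ℝ → ℝᵖ is continuous with θ̃(t) → 0 as t → ∞. Then E(t) → 0 as t → ∞. -/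
/-!
Once the forcing term `α² ‖θ̃ t‖²` stays below `ρ̄ ε / 2` from some time `T` on, comparison with
the linear equation `y' = -ρ̄ y + ρ̄ ε / 2` (Grönwall) gives
`E t ≤ E T * exp (-ρ̄ (t - T)) + ε / 2` for `t ≥ T`, and the exponential term dies out.
-/

open Filter Real Set Topology

theorem le_mul_exp_add_of_deriv_le {f : ℝ → ℝ} (hf : Differentiable ℝ f) {ρ c a b : ℝ}
    (hρ : ρ ≠ 0) (hab : a ≤ b) (bound : ∀ x ∈ Ico a b, deriv f x ≤ -ρ * f x + c) :
    f b ≤ f a * exp (-ρ * (b - a)) + c / ρ * (1 - exp (-ρ * (b - a))) := by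
  have h := le_gronwallBound_of_liminf_deriv_right_le hf.continuous.continuousOn
    (fun x _ _ hr => (hf x).hasDerivAt.hasDerivWithinAt.liminf_right_slope_le hr) le_rfl bound
    b ⟨hab, le_rfl⟩
  rw [gronwallBound_of_K_ne_0 (neg_ne_zero.mpr hρ)] at h
  convert h using 2
  ring

theorem tendsto_const_mul_exp_neg_mul_sub_atTop (C T : ℝ) {ρ : ℝ} (hρ : 0 < ρ) :
    Tendsto (fun b => C * exp (-ρ * (b - T))) atTop (𝓝 0) := by
  have h : Tendsto (fun b => ρ * (b - T)) atTop atTop :=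
    (tendsto_atTop_add_const_right atTop (-T) tendsto_id).const_mul_atTop hρ
  simpa [neg_mul] using (tendsto_exp_neg_atTop_nhds_zero.comp h).const_mul C

theorem tendsto_zero_of_deriv_le_neg_mul_add {f g : ℝ → ℝ} {ρ : ℝ} (hf : Differentiable ℝ f)
    (hf₀ : ∀ t, 0 ≤ f t) (hρ : 0 < ρ) (hg : Tendsto g atTop (𝓝 0))
    (bound : ∀ t, deriv f t ≤ -ρ * f t + g t) :
    Tendsto f atTop (𝓝 0) := by
  refine tendsto_order.2 ⟨fun a ha => .of_forall fun t => ha.trans_le (hf₀ t), fun ε hε => ?_⟩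
  obtain ⟨T, hT⟩ := eventually_atTop.1 (hg.eventually (ge_mem_nhds (by positivity : 0 < ρ * ε / 2)))
  have hdecay := (tendsto_const_mul_exp_neg_mul_sub_atTop (f T) T hρ).eventually
    (gt_mem_nhds (half_pos hε))
  filter_upwards [hdecay, eventually_ge_atTop T] with b hb hTb
  have hexp := exp_pos (-ρ * (b - T))
  have := le_mul_exp_add_of_deriv_le hf hρ.ne' hTb fun x hx =>
    (bound x).trans (add_le_add_right (hT x hx.1) _)
  have hc : ρ * ε / 2 / ρ = ε / 2 := by field_simp
  rw [hc] at this
  nlinarith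

theorem energy_tendsto_zero_of_estimation_error_tendsto_zero_general {p : ℕ}
    (E : ℝ → ℝ) (θt : ℝ → EuclideanSpace ℝ (Fin p)) (ρbar α : ℝ)
    (hE : Differentiable ℝ E) (hEnn : ∀ t : ℝ, 0 ≤ E t)
    (hρ : 0 < ρbar) (hθ0 : Tendsto θt atTop (nhds 0))
    (hineq : ∀ t : ℝ, deriv E t ≤ -ρbar * E t + α ^ 2 * ‖θt t‖ ^ 2) :
    Tendsto E atTop (nhds 0) := by
  have hforcing : Tendsto (fun t => α ^ 2 * ‖θt t‖ ^ 2) atTop (𝓝 0) := by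
    simpa using (hθ0.norm.pow 2).const_mul (α ^ 2)
  exact tendsto_zero_of_deriv_le_neg_mul_add hE hEnn hρ hforcing hineq

theorem energy_tendsto_zero_of_estimation_error_tendsto_zero {p : ℕ}
    (E : ℝ → ℝ) (θt : ℝ → EuclideanSpace ℝ (Fin p)) (ρbar α : ℝ)
    (hE : Differentiable ℝ E) (hEnn : ∀ t : ℝ, 0 ≤ E t)
    (hρ : 0 < ρbar) (hα : 0 ≤ α)
    (hθc : Continuous θt) (hθ0 : Tendsto θt atTop (nhds 0))
    (hineq : ∀ t : ℝ, deriv E t ≤ -ρbar * E t + α ^ 2 * ‖θt t‖ ^ 2) :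
    Tendsto E atTop (nhds 0) :=
  energy_tendsto_zero_of_estimation_error_tendsto_zero_general E θt ρbar α hE hEnn hρ hθ0 hineq
end
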